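/- Let A be a commutative ring, Φ a formal group law over A, and let the product group G = G₁ × G₂ act on Φ; in particular G₁ and G₂ act on Φ (via the inclusions) and the corresponding automorphisms commute: σ₁∘σ₂ = σ₂∘σ₁ for all σ₁ ∈ G₁, σ₂ ∈ G₂. Let (F₁, f₁) be a universal fixed pair for (Φ, G₁), and let G₂ act on F₁ by the induced action, namely for each σ₂ ∈ G₂ let σ'₂ be the unique automorphism of F₁ with f₁∘σ'₂ = σ₂∘f₁ (it exists and is unique by universality of (F₁,f₁), since σ₂∘f₁ is again fixed under G₁). If (F₂, f₂) is a universal fixed pair for (F₁, G₂) with respect to this induced action, then (F₂, f₁∘f₂) is a universal fixed pair for (Φ, G). -/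

import Mathlib

/-!
Write `(σ₁, σ₂) = (σ₁, 1)(1, σ₂)`. The composite `f₁ ∘ f₂` is fixed by `σ₂` because
`σ₂ ∘ f₁ = f₁ ∘ σ'₂` and `f₂` is fixed by `σ'₂`, and then by `σ₁` because `f₁` is.
A fixed pair `(F', f')` for `G` is in particular one for `G₁`, so `f' = f₁ ∘ g` for a unique `g`;
since `σ'₂ ∘ g` lifts `σ₂ ∘ f' = f'` as well, uniqueness forces `σ'₂ ∘ g = g`. Hence
`g = f₂ ∘ g₂` for a unique `g₂`, and any other `g₂'` with `f₁ ∘ f₂ ∘ g₂' = f'` agrees with `g₂`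
by the two uniqueness statements applied in turn.

The associativity of substitution is obtained by identifying `msubst` with Mathlib's
`MvPowerSeries.subst` on families without constant term.
-/

open MvPowerSeries

/-- Substitution of a family of power series into a multivariate power series,
defined coefficientwise (meaningful when each substituted series has zero constant term). -/
noncomputable def msubst {σ τ R : Type*} [Fintype σ] [DecidableEq σ] [CommRing R]
    (a : σ → MvPowerSeries τ R) (f : MvPowerSeries σ R) : MvPowerSeries τ R :=
  fun e => ∑ d ∈ Finset.Iic (Finsupp.equivFunOnFinite.symm (fun _ : σ => e.sum fun _ n => n)),
    MvPowerSeries.coeff d f * MvPowerSeries.coeff e (∏ s : σ, a s ^ d s)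

variable {R : Type*} [CommRing R]

/-- `plugPair F G H = F(G, H)`. -/
noncomputable def plugPair {d : ℕ} {σ : Type*} (F : Fin d → MvPowerSeries (Fin d ⊕ Fin d) R)
    (G H : Fin d → MvPowerSeries σ R) : Fin d → MvPowerSeries σ R :=
  fun l => msubst (Sum.elim G H) (F l)

/-- composition of tuples of power series: `fcomp g h = g ∘ h`. -/
noncomputable def fcomp {d e f : ℕ} (g : Fin f → MvPowerSeries (Fin e) R)
    (h : Fin e → MvPowerSeries (Fin d) R) : Fin f → MvPowerSeries (Fin d) R :=
  fun l => msubst h (g l)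

/-- the identity tuple `X`. -/
noncomputable def fid (d : ℕ) : Fin d → MvPowerSeries (Fin d) R := fun l => MvPowerSeries.X l

/-- `F` is a `d`-dimensional formal group law over `R`. -/
noncomputable def IsFGL {d : ℕ} (F : Fin d → MvPowerSeries (Fin d ⊕ Fin d) R) : Prop :=
  (∀ l, MvPowerSeries.constantCoeff (F l) = 0) ∧
  -- F(X, 0) = X
  plugPair F (fid d) 0 = fid d ∧
  -- F(X, Y) = F(Y, X)
  plugPair F (fun i => MvPowerSeries.X (Sum.inr i)) (fun i => MvPowerSeries.X (Sum.inl i)) = F ∧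
  -- F(X, F(Y, Z)) = F(F(X, Y), Z)
  plugPair F (fun i => MvPowerSeries.X (Sum.inl i))
      (plugPair F (fun i => MvPowerSeries.X (Sum.inr (Sum.inl i)))
        (fun i => MvPowerSeries.X (Sum.inr (Sum.inr i)))) =
    plugPair F
      (plugPair F (fun i => MvPowerSeries.X (Sum.inl i))
        (fun i => (MvPowerSeries.X (Sum.inr (Sum.inl i)) :
          MvPowerSeries (Fin d ⊕ (Fin d ⊕ Fin d)) R)))
      (fun i => MvPowerSeries.X (Sum.inr (Sum.inr i)))

/-- `f` is a homomorphism from the `d`-dimensional formal group law `F` to the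
`e`-dimensional formal group law `F'`:  `f(F(X,Y)) = F'(f(X), f(Y))`. -/
noncomputable def IsFGLHom {d e : ℕ} (F : Fin d → MvPowerSeries (Fin d ⊕ Fin d) R)
    (F' : Fin e → MvPowerSeries (Fin e ⊕ Fin e) R)
    (f : Fin e → MvPowerSeries (Fin d) R) : Prop :=
  (∀ l, MvPowerSeries.constantCoeff (f l) = 0) ∧
  (fun l => msubst F (f l)) =
    plugPair F' (fun l => msubst (fun i => MvPowerSeries.X (Sum.inl i)) (f l))
      (fun l => msubst (fun i => MvPowerSeries.X (Sum.inr i)) (f l))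

/-- an action of the group `G` on the formal group law `Φ` by automorphisms. -/
noncomputable def IsFGLAction {d : ℕ} (Φ : Fin d → MvPowerSeries (Fin d ⊕ Fin d) R)
    {G : Type*} [Group G] (ρ : G → (Fin d → MvPowerSeries (Fin d) R)) : Prop :=
  (∀ σ : G, IsFGLHom Φ Φ (ρ σ)) ∧ ρ 1 = fid d ∧
  ∀ σ τ : G, ρ (σ * τ) = fcomp (ρ σ) (ρ τ)

/-- `(F, f)` is a fixed pair for `(Φ, ρ)`. -/
noncomputable def IsFixedPair {d e : ℕ} (Φ : Fin d → MvPowerSeries (Fin d ⊕ Fin d) R)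
    {G : Type*} (ρ : G → (Fin d → MvPowerSeries (Fin d) R))
    (F : Fin e → MvPowerSeries (Fin e ⊕ Fin e) R)
    (f : Fin d → MvPowerSeries (Fin e) R) : Prop :=
  IsFGL F ∧ IsFGLHom F Φ f ∧ ∀ σ : G, fcomp (ρ σ) f = f

/-- `(F, f)` is a universal fixed pair for `(Φ, ρ)`. -/
noncomputable def IsUniversalFixedPair {d e : ℕ}
    (Φ : Fin d → MvPowerSeries (Fin d ⊕ Fin d) R)
    {G : Type*} (ρ : G → (Fin d → MvPowerSeries (Fin d) R))
    (F : Fin e → MvPowerSeries (Fin e ⊕ Fin e) R)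
    (f : Fin d → MvPowerSeries (Fin e) R) : Prop :=
  IsFixedPair Φ ρ F f ∧
  ∀ (e' : ℕ) (F' : Fin e' → MvPowerSeries (Fin e' ⊕ Fin e') R)
    (f' : Fin d → MvPowerSeries (Fin e') R),
    IsFixedPair Φ ρ F' f' →
    ∃! g : Fin e → MvPowerSeries (Fin e') R, IsFGLHom F' F g ∧ fcomp f g = f'

namespace MvPowerSeries

variable {σ τ : Type*}

theorem degree_le_order_prod_pow {a : σ → MvPowerSeries τ R}
    (ha : ∀ s, constantCoeff (a s) = 0) (d : σ →₀ ℕ) :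
    (d.degree : ℕ∞) ≤ (d.prod fun s n => a s ^ n).order := by
  rw [Finsupp.degree_apply, Nat.cast_sum]
  exact (Finset.sum_le_sum fun s _ => le_order_pow_of_constantCoeff_eq_zero _ (ha s)).trans
    (le_order_prod _ _)

end MvPowerSeries

section msubst

variable {σ τ υ : Type*} [Fintype σ] [DecidableEq σ] {a : σ → MvPowerSeries τ R}

theorem msubst_eq_subst (ha : ∀ s, constantCoeff (a s) = 0) (f : MvPowerSeries σ R) :
    msubst a f = subst a f := by
  ext e
  rw [coeff_subst (hasSubst_of_constantCoeff_zero ha), finsum_eq_sum_of_support_subset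
    (s := Finset.Iic (Finsupp.equivFunOnFinite.symm fun _ : σ => e.degree))]
  · refine Finset.sum_congr rfl fun d _ => ?_
    rw [smul_eq_mul, Finsupp.prod_fintype _ _ fun _ => pow_zero _]
  · intro d hd
    rw [Function.mem_support] at hd
    have hde : d.degree ≤ e.degree := by
      by_contra! h
      exact hd (by rw [coeff_of_lt_order ((Nat.cast_lt.2 h).trans_le
        (degree_le_order_prod_pow ha d)), smul_zero])
    simpa [Finsupp.le_def] using fun s => (Finsupp.le_degree s d).trans hde

theorem constantCoeff_msubst (ha : ∀ s, constantCoeff (a s) = 0) {f : MvPowerSeries σ R}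
    (hf : constantCoeff f = 0) : constantCoeff (msubst a f) = 0 := by
  rw [msubst_eq_subst ha]
  exact constantCoeff_subst_eq_zero (hasSubst_of_constantCoeff_zero ha) ha hf

theorem constantCoeff_msubst_X {ι : σ → υ} {f : MvPowerSeries σ R} (hf : constantCoeff f = 0) :
    constantCoeff (msubst (fun s => (X (ι s) : MvPowerSeries υ R)) f) = 0 :=
  constantCoeff_msubst (fun _ => constantCoeff_X _) hf

theorem msubst_X (ha : ∀ s, constantCoeff (a s) = 0) (s : σ) : msubst a (X s) = a s := by
  rw [msubst_eq_subst ha, subst_X (hasSubst_of_constantCoeff_zero ha)]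

theorem msubst_msubst [Fintype τ] [DecidableEq τ] {b : τ → MvPowerSeries υ R}
    (ha : ∀ s, constantCoeff (a s) = 0) (hb : ∀ t, constantCoeff (b t) = 0)
    (f : MvPowerSeries σ R) : msubst b (msubst a f) = msubst (fun s => msubst b (a s)) f := by
  have hba : ∀ s, constantCoeff (msubst b (a s)) = 0 := fun s => constantCoeff_msubst hb (ha s)
  rw [msubst_eq_subst hba, msubst_eq_subst ha]
  simp_rw [msubst_eq_subst hb]
  exact subst_comp_subst_apply (hasSubst_of_constantCoeff_zero ha)
    (hasSubst_of_constantCoeff_zero hb) f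

end msubst

section FGL

variable {d e e' e'' : ℕ}

theorem fcomp_assoc {a : Fin e'' → MvPowerSeries (Fin e') R} {b : Fin e' → MvPowerSeries (Fin e) R}
    {c : Fin e → MvPowerSeries (Fin d) R} (hb : ∀ l, constantCoeff (b l) = 0)
    (hc : ∀ l, constantCoeff (c l) = 0) : fcomp (fcomp a b) c = fcomp a (fcomp b c) :=
  funext fun l => msubst_msubst hb hc (a l)

theorem IsFGLHom.comp {F : Fin d → MvPowerSeries (Fin d ⊕ Fin d) R}
    {F' : Fin e → MvPowerSeries (Fin e ⊕ Fin e) R}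
    {F'' : Fin e' → MvPowerSeries (Fin e' ⊕ Fin e') R}
    {f : Fin e → MvPowerSeries (Fin d) R} {g : Fin e' → MvPowerSeries (Fin e) R}
    (hg : IsFGLHom F' F'' g) (hf : IsFGLHom F F' f)
    (hF : ∀ l, constantCoeff (F l) = 0) (hF' : ∀ l, constantCoeff (F' l) = 0) :
    IsFGLHom F F'' (fcomp g f) := by
  obtain ⟨hf₀, hfF⟩ := hf
  obtain ⟨hg₀, hgF⟩ := hg
  set fXY : Fin e ⊕ Fin e → MvPowerSeries (Fin d ⊕ Fin d) R :=
    Sum.elim (fun l => msubst (fun i => X (Sum.inl i)) (f l))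
      (fun l => msubst (fun i => X (Sum.inr i)) (f l))
  set gXY : Fin e' ⊕ Fin e' → MvPowerSeries (Fin e ⊕ Fin e) R :=
    Sum.elim (fun l => msubst (fun i => X (Sum.inl i)) (g l))
      (fun l => msubst (fun i => X (Sum.inr i)) (g l))
  have hfXY : ∀ k, constantCoeff (fXY k) = 0 :=
    Sum.forall.2 ⟨fun l => constantCoeff_msubst_X (hf₀ l), fun l => constantCoeff_msubst_X (hf₀ l)⟩
  have hgXY : ∀ k, constantCoeff (gXY k) = 0 :=
    Sum.forall.2 ⟨fun l => constantCoeff_msubst_X (hg₀ l), fun l => constantCoeff_msubst_X (hg₀ l)⟩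
  -- substituting `fXY = (f(X), f(Y))` into `g(X)` or `g(Y)` gives `(g ∘ f)(X)` or `(g ∘ f)(Y)`
  have hren : ∀ (ι : Fin d → Fin d ⊕ Fin d) (κ : Fin e → Fin e ⊕ Fin e),
      (∀ k, fXY (κ k) = msubst (fun i => X (ι i)) (f k)) → ∀ j,
      msubst fXY (msubst (fun k => X (κ k)) (g j)) =
        msubst (fun i => X (ι i)) (msubst f (g j)) := by
    intro ι κ h j
    rw [msubst_msubst (fun _ => constantCoeff_X _) hfXY,
      msubst_msubst hf₀ (fun _ => constantCoeff_X _)]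
    simp only [msubst_X hfXY, h]
  refine ⟨fun l => constantCoeff_msubst hf₀ (hg₀ l), funext fun l => ?_⟩
  calc msubst F (msubst f (g l)) = msubst (fun i => msubst F (f i)) (g l) := msubst_msubst hf₀ hF _
    _ = msubst (fun i => msubst fXY (F' i)) (g l) := by rw [hfF]; rfl
    _ = msubst fXY (msubst F' (g l)) := (msubst_msubst hF' hfXY _).symm
    _ = msubst fXY (msubst gXY (F'' l)) := by rw [congrFun hgF l]; rfl
    _ = msubst (fun i => msubst fXY (gXY i)) (F'' l) := msubst_msubst hgXY hfXY _
    _ = _ := by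
      congr 1
      funext k
      rcases k with j | j
      exacts [hren Sum.inl Sum.inl (fun _ => rfl) j, hren Sum.inr Sum.inr (fun _ => rfl) j]

theorem IsUniversalFixedPair.hom_ext {G : Type*} {Φ : Fin d → MvPowerSeries (Fin d ⊕ Fin d) R}
    {ρ : G → Fin d → MvPowerSeries (Fin d) R} {F : Fin e → MvPowerSeries (Fin e ⊕ Fin e) R}
    {f : Fin d → MvPowerSeries (Fin e) R} (hu : IsUniversalFixedPair Φ ρ F f)
    {F' : Fin e' → MvPowerSeries (Fin e' ⊕ Fin e') R} {g g' : Fin e → MvPowerSeries (Fin e') R}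
    (hfix : IsFixedPair Φ ρ F' (fcomp f g)) (hg : IsFGLHom F' F g) (hg' : IsFGLHom F' F g')
    (h : fcomp f g' = fcomp f g) : g' = g :=
  (hu.2 e' F' _ hfix).unique ⟨hg', h⟩ ⟨hg, rfl⟩

theorem fcomp_fixed_of_intertwine {α β : Fin d → MvPowerSeries (Fin d) R}
    {β' : Fin e → MvPowerSeries (Fin e) R} {f₁ : Fin d → MvPowerSeries (Fin e) R}
    {f₂ : Fin e → MvPowerSeries (Fin e') R} (hβ : ∀ l, constantCoeff (β l) = 0)
    (hβ' : ∀ l, constantCoeff (β' l) = 0) (hf₁ : ∀ l, constantCoeff (f₁ l) = 0)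
    (hf₂ : ∀ l, constantCoeff (f₂ l) = 0) (hαf₁ : fcomp α f₁ = f₁)
    (hβf₁ : fcomp f₁ β' = fcomp β f₁) (hβ'f₂ : fcomp β' f₂ = f₂) :
    fcomp (fcomp α β) (fcomp f₁ f₂) = fcomp f₁ f₂ := by
  rw [← fcomp_assoc hf₁ hf₂, fcomp_assoc hβ hf₁, ← hβf₁, ← fcomp_assoc hf₁ hβ', hαf₁,
    fcomp_assoc hβ' hf₂, hβ'f₂]

end FGL

theorem ufix_prod_general {A : Type*} [CommRing A] {G₁ G₂ : Type*} [Group G₁] [Group G₂]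
    (d e₁ e₂ : ℕ)
    (Φ : Fin d → MvPowerSeries (Fin d ⊕ Fin d) A)
    (ρ : G₁ × G₂ → (Fin d → MvPowerSeries (Fin d) A)) (hρ : IsFGLAction Φ ρ)
    (F₁ : Fin e₁ → MvPowerSeries (Fin e₁ ⊕ Fin e₁) A)
    (f₁ : Fin d → MvPowerSeries (Fin e₁) A)
    (hFf₁ : IsUniversalFixedPair Φ (fun σ₁ : G₁ => ρ (σ₁, 1)) F₁ f₁)
    -- the induced action of G₂ on F₁: f₁ ∘ σ'₂ = σ₂ ∘ f₁
    (ρ₂' : G₂ → (Fin e₁ → MvPowerSeries (Fin e₁) A))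
    (hρ₂' : ∀ σ₂ : G₂, IsFGLHom F₁ F₁ (ρ₂' σ₂) ∧
      fcomp f₁ (ρ₂' σ₂) = fcomp (ρ (1, σ₂)) f₁)
    (F₂ : Fin e₂ → MvPowerSeries (Fin e₂ ⊕ Fin e₂) A)
    (f₂ : Fin e₁ → MvPowerSeries (Fin e₂) A)
    (hFf₂ : IsUniversalFixedPair F₁ ρ₂' F₂ f₂) :
    IsUniversalFixedPair Φ ρ F₂ (fcomp f₁ f₂) := by
  have hρ₂'₀ : ∀ σ₂, ∀ l, constantCoeff (ρ₂' σ₂ l) = 0 := fun σ₂ => (hρ₂' σ₂).1.1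
  have ⟨⟨hF₁, hf₁, hf₁fix⟩, _⟩ := hFf₁
  have ⟨⟨hF₂, hf₂, hf₂fix⟩, _⟩ := hFf₂
  refine ⟨⟨hF₂, hf₁.comp hf₂ hF₂.1 hF₁.1, fun ⟨σ₁, σ₂⟩ => ?_⟩, fun e' F' f' hfix => ?_⟩
  · rw [← mul_one σ₁, ← one_mul σ₂, ← Prod.mk_mul_mk, hρ.2.2]
    exact fcomp_fixed_of_intertwine (hρ.1 _).1 (hρ₂'₀ σ₂) hf₁.1 hf₂.1 (hf₁fix σ₁)
      (hρ₂' σ₂).2 (hf₂fix σ₂)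
  have hfix₁ : IsFixedPair Φ (fun σ₁ : G₁ => ρ (σ₁, 1)) F' f' :=
    ⟨hfix.1, hfix.2.1, fun σ₁ => hfix.2.2 (σ₁, 1)⟩
  obtain ⟨g, ⟨hg, rfl⟩, -⟩ := hFf₁.2 e' F' f' hfix₁
  have hgfix : ∀ σ₂, fcomp (ρ₂' σ₂) g = g := fun σ₂ =>
    hFf₁.hom_ext hfix₁ hg ((hρ₂' σ₂).1.comp hg hfix.1.1 hF₁.1) <| by
      rw [← fcomp_assoc (hρ₂'₀ σ₂) hg.1, (hρ₂' σ₂).2, fcomp_assoc hf₁.1 hg.1, hfix.2.2 (1, σ₂)]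
  obtain ⟨g₂, ⟨hg₂, rfl⟩, -⟩ := hFf₂.2 e' F' g ⟨hfix.1, hg, hgfix⟩
  refine ⟨g₂, ⟨hg₂, fcomp_assoc hf₂.1 hg₂.1⟩, fun g₂' ⟨hg₂', hcomp⟩ => ?_⟩
  refine hFf₂.hom_ext ⟨hfix.1, hg, hgfix⟩ hg₂ hg₂' <|
    hFf₁.hom_ext hfix₁ hg (hf₂.comp hg₂' hfix.1.1 hF₂.1) ?_
  rw [← fcomp_assoc hf₂.1 hg₂'.1, hcomp]

/-- Proposition `ufix_prod`.  If `G = G₁ × G₂` acts on `Φ`, `(F₁, f₁)` is a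
universal fixed pair for `(Φ, G₁)`, `G₂` acts on `F₁` via the induced action, and
`(F₂, f₂)` is a universal fixed pair for `(F₁, G₂)`, then `(F₂, f₁∘f₂)` is a universal
fixed pair for `(Φ, G)`. -/
theorem ufix_prod {A : Type*} [CommRing A] {G₁ G₂ : Type*} [Group G₁] [Group G₂]
    (d e₁ e₂ : ℕ)
    (Φ : Fin d → MvPowerSeries (Fin d ⊕ Fin d) A) (hΦ : IsFGL Φ)
    (ρ : G₁ × G₂ → (Fin d → MvPowerSeries (Fin d) A)) (hρ : IsFGLAction Φ ρ)
    (F₁ : Fin e₁ → MvPowerSeries (Fin e₁ ⊕ Fin e₁) A)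
    (f₁ : Fin d → MvPowerSeries (Fin e₁) A)
    (hFf₁ : IsUniversalFixedPair Φ (fun σ₁ : G₁ => ρ (σ₁, 1)) F₁ f₁)
    -- the induced action of G₂ on F₁: f₁ ∘ σ'₂ = σ₂ ∘ f₁
    (ρ₂' : G₂ → (Fin e₁ → MvPowerSeries (Fin e₁) A))
    (hρ₂' : ∀ σ₂ : G₂, IsFGLHom F₁ F₁ (ρ₂' σ₂) ∧
      fcomp f₁ (ρ₂' σ₂) = fcomp (ρ (1, σ₂)) f₁)
    (F₂ : Fin e₂ → MvPowerSeries (Fin e₂ ⊕ Fin e₂) A)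
    (f₂ : Fin e₁ → MvPowerSeries (Fin e₂) A)
    (hFf₂ : IsUniversalFixedPair F₁ ρ₂' F₂ f₂) :
    IsUniversalFixedPair Φ ρ F₂ (fcomp f₁ f₂) :=
  ufix_prod_general d e₁ e₂ Φ ρ hρ F₁ f₁ hFf₁ ρ₂' hρ₂' F₂ f₂ hFf₂
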